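/- arXiv:1706.02380 — 2 statements merged into one kernel-verified Lean document; each statement's English description precedes it below -/
import Mathlib

section
/- For composition matrices A, B in S(α,β) = {X ∈ ℝ^{n×p} : X·1_p = 1_n, α/p ≤ X_{ij} ≤ β/p}, the sum of row-wise Kullback–Leibler divergences D(A,B) = Σ_{i,j} A_{ij} log(A_{ij}/B_{ij}) satisfies (α p)/(2β²) · ‖A−B‖_F² ≤ D(A,B) ≤ (β p)/(2α²) · ‖A−B‖_F². -/
open Finset Real Set

/-!
Since corresponding rows of `A` and `B` have equal sums, `D(A, B)` is the sum of the entrywise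
terms `a log (a / b) - a + b ≥ 0`. As a function of `b` such a term vanishes at `b = a` and has
derivative `(b - a) / b`, whereas `(b - a) ^ 2 / (2 K)` has derivative `(b - a) / K`. Comparing the
two derivatives between `a` and `b` squeezes the term between `(a - b) ^ 2 / (2 max a b)` and
`(a - b) ^ 2 / (2 min a b)`; the entries lie in `[α / p, β / p]`.
-/

theorem le_of_sub_mul_deriv_nonneg {f f' : ℝ → ℝ} {a b : ℝ}
    (hf : ∀ t ∈ uIcc a b, HasDerivAt f (f' t) t)
    (hf' : ∀ t ∈ uIcc a b, 0 ≤ (t - a) * f' t) :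
    f a ≤ f b := by
  have hcont : ContinuousOn f (uIcc a b) := fun t ht => (hf t ht).continuousAt.continuousWithinAt
  have hderiv : ∀ t ∈ interior (uIcc a b), HasDerivWithinAt f (f' t) (interior (uIcc a b)) t :=
    fun t ht => (hf t (interior_subset ht)).hasDerivWithinAt
  rcases le_total a b with hab | hba
  · rw [uIcc_of_le hab] at hcont hderiv hf'
    refine monotoneOn_of_hasDerivWithinAt_nonneg (convex_Icc a b) hcont hderiv (fun t ht => ?_)
      (left_mem_Icc.2 hab) (right_mem_Icc.2 hab) hab
    rw [interior_Icc] at ht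
    exact nonneg_of_mul_nonneg_right (hf' t (Ioo_subset_Icc_self ht)) (sub_pos.2 ht.1)
  · rw [uIcc_of_ge hba] at hcont hderiv hf'
    refine antitoneOn_of_hasDerivWithinAt_nonpos (convex_Icc b a) hcont hderiv (fun t ht => ?_)
      (left_mem_Icc.2 hba) (right_mem_Icc.2 hba) hba
    rw [interior_Icc] at ht
    exact nonpos_of_mul_nonneg_right (hf' t (Ioo_subset_Icc_self ht)) (sub_neg.2 ht.2)

theorem hasDerivAt_mul_log_div_sub_add {a t : ℝ} (ha : 0 < a) (ht : 0 < t) :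
    HasDerivAt (fun t => a * log (a / t) - a + t) (1 - a / t) t := by
  have hlog := ((hasDerivAt_const t a).div (hasDerivAt_id' t) ht.ne').log (div_pos ha ht).ne'
  refine (((hlog.const_mul a).sub_const a).add (hasDerivAt_id' t)).congr_deriv ?_
  simp only [Pi.div_apply]
  field_simp
  ring

theorem hasDerivAt_sq_sub_div (a K t : ℝ) :
    HasDerivAt (fun t => (t - a) ^ 2 / (2 * K)) ((t - a) / K) t := by
  refine ((((hasDerivAt_id' t).sub_const a).pow 2).div_const (2 * K)).congr_deriv ?_
  ring

theorem sq_sub_div_le_mul_log_div_sub_add {a b K : ℝ} (ha : 0 < a) (hb : 0 < b)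
    (haK : a ≤ K) (hbK : b ≤ K) :
    (a - b) ^ 2 / (2 * K) ≤ a * log (a / b) - a + b := by
  have key := le_of_sub_mul_deriv_nonneg (a := a) (b := b)
    (f := fun t => a * log (a / t) - a + t - (t - a) ^ 2 / (2 * K))
    (f' := fun t => 1 - a / t - (t - a) / K)
    (fun t ht => (hasDerivAt_mul_log_div_sub_add ha ((lt_min ha hb).trans_le ht.1)).sub
      (hasDerivAt_sq_sub_div a K t))
    (fun t ht => by
      have ht0 : 0 < t := (lt_min ha hb).trans_le ht.1
      have htK : t ≤ K := ht.2.trans (max_le haK hbK)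
      calc 0 ≤ (t - a) ^ 2 * (1 / t - 1 / K) :=
            mul_nonneg (sq_nonneg _) (sub_nonneg.2 (one_div_le_one_div_of_le ht0 htK))
        _ = (t - a) * (1 - a / t - (t - a) / K) := by field_simp)
  simpa [div_self ha.ne', sub_sq_comm b a] using key

theorem mul_log_div_sub_add_le_sq_sub_div {a b K : ℝ} (hK : 0 < K)
    (hKa : K ≤ a) (hKb : K ≤ b) :
    a * log (a / b) - a + b ≤ (a - b) ^ 2 / (2 * K) := by
  have ha := hK.trans_le hKa
  have key := le_of_sub_mul_deriv_nonneg (a := a) (b := b)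
    (f := fun t => (t - a) ^ 2 / (2 * K) - (a * log (a / t) - a + t))
    (f' := fun t => (t - a) / K - (1 - a / t))
    (fun t ht => (hasDerivAt_sq_sub_div a K t).sub
      (hasDerivAt_mul_log_div_sub_add ha (hK.trans_le ((le_min hKa hKb).trans ht.1))))
    (fun t ht => by
      have hKt : K ≤ t := (le_min hKa hKb).trans ht.1
      calc 0 ≤ (t - a) ^ 2 * (1 / K - 1 / t) :=
            mul_nonneg (sq_nonneg _) (sub_nonneg.2 (one_div_le_one_div_of_le hK hKt))
        _ = (t - a) * ((t - a) / K - (1 - a / t)) := by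
            field_simp [(hK.trans_le hKt).ne'])
  simpa [div_self ha.ne', sub_sq_comm b a] using key

theorem mul_log_div_sub_add_mem_Icc {m M a b : ℝ} (hm : 0 < m) (ha : a ∈ Set.Icc m M)
    (hb : b ∈ Set.Icc m M) :
    a * log (a / b) - a + b ∈
      Set.Icc (m / (2 * M ^ 2) * (a - b) ^ 2) (M / (2 * m ^ 2) * (a - b) ^ 2) := by
  have hmM : m ≤ M := ha.1.trans ha.2
  have hM : 0 < M := hm.trans_le hmM
  constructor
  · calc m / (2 * M ^ 2) * (a - b) ^ 2 = m / M * ((a - b) ^ 2 / (2 * M)) := by field_simp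
      _ ≤ 1 * ((a - b) ^ 2 / (2 * M)) := by gcongr; exact div_le_one_of_le₀ hmM hM.le
      _ ≤ a * log (a / b) - a + b := by
        rw [one_mul]
        exact sq_sub_div_le_mul_log_div_sub_add (hm.trans_le ha.1) (hm.trans_le hb.1) ha.2 hb.2
  · calc a * log (a / b) - a + b ≤ 1 * ((a - b) ^ 2 / (2 * m)) := by
          rw [one_mul]; exact mul_log_div_sub_add_le_sq_sub_div hm ha.1 hb.1
      _ ≤ M / m * ((a - b) ^ 2 / (2 * m)) := by gcongr; exact (one_le_div hm).2 hmM
      _ = M / (2 * m ^ 2) * (a - b) ^ 2 := by field_simp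

theorem sum_mul_log_div_eq_sum_sub_add {ι : Type*} (s : Finset ι) {a b : ι → ℝ}
    (h : ∑ j ∈ s, a j = ∑ j ∈ s, b j) :
    ∑ j ∈ s, a j * log (a j / b j) = ∑ j ∈ s, (a j * log (a j / b j) - a j + b j) := by
  rw [sum_add_distrib, sum_sub_distrib, h, sub_add_cancel]

theorem stmt0_general {n p : ℕ} (hp : 0 < p) (α β : ℝ) (hα : 0 < α)
    (A B : Matrix (Fin n) (Fin p) ℝ)
    (hA1 : ∀ i, ∑ j, A i j = 1) (hA2 : ∀ i j, α / p ≤ A i j ∧ A i j ≤ β / p)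
    (hB1 : ∀ i, ∑ j, B i j = 1) (hB2 : ∀ i j, α / p ≤ B i j ∧ B i j ≤ β / p) :
    α * p / (2 * β ^ 2) * (∑ i, ∑ j, (A i j - B i j) ^ 2)
      ≤ (∑ i, ∑ j, A i j * Real.log (A i j / B i j)) ∧
    (∑ i, ∑ j, A i j * Real.log (A i j / B i j))
      ≤ β * p / (2 * α ^ 2) * (∑ i, ∑ j, (A i j - B i j) ^ 2) := by
  have hp' : (0 : ℝ) < p := Nat.cast_pos.2 hp
  have entry : ∀ i j, A i j * log (A i j / B i j) - A i j + B i j ∈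
      Set.Icc (α * p / (2 * β ^ 2) * (A i j - B i j) ^ 2)
        (β * p / (2 * α ^ 2) * (A i j - B i j) ^ 2) := by
    intro i j
    convert mul_log_div_sub_add_mem_Icc (div_pos hα hp') (hA2 i j) (hB2 i j) using 3 <;> field_simp
  rw [sum_congr rfl fun i _ => sum_mul_log_div_eq_sum_sub_add univ ((hA1 i).trans (hB1 i).symm)]
  simp only [mul_sum]
  exact ⟨sum_le_sum fun i _ => sum_le_sum fun j _ => (entry i j).1,
    sum_le_sum fun i _ => sum_le_sum fun j _ => (entry i j).2⟩

/-- **KL–Frobenius comparison for composition matrices.**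
For `A, B ∈ S(α,β)` (rows sum to 1, entries in `[α/p, β/p]`),
`(αp)/(2β²)·‖A−B‖_F² ≤ D(A,B) ≤ (βp)/(2α²)·‖A−B‖_F²`. -/
theorem stmt0 {n p : ℕ} (hp : 0 < p) (α β : ℝ) (hα : 0 < α) (hαβ : α ≤ β)
    (A B : Matrix (Fin n) (Fin p) ℝ)
    (hA1 : ∀ i, ∑ j, A i j = 1) (hA2 : ∀ i j, α / p ≤ A i j ∧ A i j ≤ β / p)
    (hB1 : ∀ i, ∑ j, B i j = 1) (hB2 : ∀ i j, α / p ≤ B i j ∧ B i j ≤ β / p) :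
    α * p / (2 * β ^ 2) * (∑ i, ∑ j, (A i j - B i j) ^ 2)
      ≤ (∑ i, ∑ j, A i j * Real.log (A i j / B i j)) ∧
    (∑ i, ∑ j, A i j * Real.log (A i j / B i j))
      ≤ β * p / (2 * α ^ 2) * (∑ i, ∑ j, (A i j - B i j) ^ 2) :=
  stmt0_general hp α β hα A B hA1 hA2 hB1 hB2
end

section
/- Let 0 < α ≤ β, p ≥ 1, x ∈ ℝ^p, and suppose μ ∈ ℝ satisfies Σ_{i=1}^p clamp(x_i − μ; α/p, β/p) = 1. Then the vector x̂ with x̂_i = clamp(x_i − μ; α/p, β/p) is the unique minimizer of ‖x̂ − x‖₂² over the set {y ∈ ℝ^p : Σ y_i = 1, α/p ≤ y_i ≤ β/p}. -/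
open Finset

/-- Projection of `t` onto the interval `[a,b]`. -/
noncomputable def clamp (t a b : ℝ) : ℝ := min (max t a) b

lemma clamp_mem {t a b : ℝ} (hab : a ≤ b) : a ≤ clamp t a b ∧ clamp t a b ≤ b := by
  unfold clamp
  constructor
  · exact le_min (le_max_right _ _) hab
  · exact min_le_right _ _

lemma clamp_key {t a b y : ℝ} (hab : a ≤ b) (h1 : a ≤ y) (h2 : y ≤ b) :
    0 ≤ (y - clamp t a b) * (clamp t a b - t) := by
  unfold clamp
  rcases le_total t a with h | h
  · rw [max_eq_right h, min_eq_left hab]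
    exact mul_nonneg (by linarith) (by linarith)
  · rw [max_eq_left h]
    rcases le_total t b with h' | h'
    · rw [min_eq_left h']
      simp
    · rw [min_eq_right h']
      nlinarith

/-- **KKT characterization of the Euclidean projection onto the bounded simplex.**
If `μ` satisfies `Σ_i clamp(x_i − μ; α/p, β/p) = 1` then `x̂_i = clamp(x_i − μ; α/p, β/p)`
is the unique minimizer of `‖x̂ − x‖₂²` over `{y : Σ y_i = 1, α/p ≤ y_i ≤ β/p}`. -/
theorem stmt4 {p : ℕ} (hp : 0 < p) (α β : ℝ) (hα : 0 < α) (hαβ : α ≤ β)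
    (x : Fin p → ℝ) (μ : ℝ)
    (hμ : ∑ i, clamp (x i - μ) (α / p) (β / p) = 1) :
    (∑ i, clamp (x i - μ) (α / p) (β / p) = 1 ∧
      ∀ i, α / p ≤ clamp (x i - μ) (α / p) (β / p) ∧
        clamp (x i - μ) (α / p) (β / p) ≤ β / p) ∧
    ∀ y : Fin p → ℝ, (∑ i, y i = 1) → (∀ i, α / p ≤ y i ∧ y i ≤ β / p) →
      (∑ i, (clamp (x i - μ) (α / p) (β / p) - x i) ^ 2 ≤ ∑ i, (y i - x i) ^ 2) ∧
      ((∑ i, (y i - x i) ^ 2 = ∑ i, (clamp (x i - μ) (α / p) (β / p) - x i) ^ 2) →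
        y = fun i => clamp (x i - μ) (α / p) (β / p)) := by
  have hab : α / p ≤ β / p := by
    have hp' : (0:ℝ) < p := by exact_mod_cast hp
    gcongr
  set c : Fin p → ℝ := fun i => clamp (x i - μ) (α / p) (β / p) with hc
  refine ⟨⟨hμ, fun i => clamp_mem hab⟩, fun y hy hyb => ?_⟩
  -- key: ∑ (y i - c i) * (c i - x i) ≥ 0
  have key : 0 ≤ ∑ i, (y i - c i) * (c i - x i) := by
    have h1 : ∀ i ∈ univ, (0:ℝ) ≤ (y i - c i) * (c i - (x i - μ)) := by
      intro i _
      exact clamp_key hab (hyb i).1 (hyb i).2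
    have h2 : 0 ≤ ∑ i, (y i - c i) * (c i - (x i - μ)) := Finset.sum_nonneg h1
    have h3 : ∑ i, (y i - c i) * (c i - (x i - μ))
        = ∑ i, (y i - c i) * (c i - x i) + μ * (∑ i, y i - ∑ i, c i) := by
      rw [← Finset.sum_sub_distrib, Finset.mul_sum, ← Finset.sum_add_distrib]
      apply Finset.sum_congr rfl
      intro i _; ring
    rw [h3, hy, hμ] at h2
    simpa using h2
  have expand : ∑ i, (y i - x i) ^ 2
      = ∑ i, (c i - x i) ^ 2 + ∑ i, (y i - c i) ^ 2
        + 2 * ∑ i, (y i - c i) * (c i - x i) := by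
    rw [Finset.mul_sum, ← Finset.sum_add_distrib, ← Finset.sum_add_distrib]
    apply Finset.sum_congr rfl
    intro i _; ring
  have hsq : 0 ≤ ∑ i, (y i - c i) ^ 2 :=
    Finset.sum_nonneg fun i _ => sq_nonneg _
  constructor
  · rw [expand]; linarith
  · intro heq
    have hz : ∑ i, (y i - c i) ^ 2 = 0 := by
      rw [expand] at heq; linarith
    funext i
    have := (Finset.sum_eq_zero_iff_of_nonneg (fun i _ => sq_nonneg (y i - c i))).mp hz i (mem_univ i)
    have : y i - c i = 0 := by
      nlinarith [sq_nonneg (y i - c i)]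
    linarith
end
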